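/- arXiv:math/0306162 — 3 statements merged into one kernel-verified Lean document; each statement's English description precedes it below -/
import Mathlib

section
/- Let φ = (φ₀, φ₂, φ₄) be an even complex form on V with φ₀ ≠ 0 and ⟨φ,φ⟩ = 0, and set B := Re(φ₀⁻¹·φ₂) and ω := Im(φ₀⁻¹·φ₂) in ⋀²V. Then φ = φ₀·exp(B+iω), i.e. φ₂ = φ₀·(B+iω) and φ₄ = (φ₀/2)·(B+iω)∧(B+iω); moreover ⟨φ,φ̄⟩ = 2·|φ₀|²·(ω∧ω), so that ⟨φ,φ̄⟩ > 0 if and only if ω∧ω > 0. -/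
/-!
Statement 2: Let φ = (φ₀, φ₂, φ₄) be an even complex form on V with φ₀ ≠ 0 and ⟨φ,φ⟩ = 0, and
set B := Re(φ₀⁻¹·φ₂) and ω := Im(φ₀⁻¹·φ₂) in ⋀²V. Then φ = φ₀·exp(B+iω), i.e.
φ₂ = φ₀·(B+iω) and φ₄ = (φ₀/2)·(B+iω)∧(B+iω); moreover ⟨φ,φ̄⟩ = 2·|φ₀|²·(ω∧ω), so that
⟨φ,φ̄⟩ > 0 if and only if ω∧ω > 0.
-/

open scoped TensorProduct

set_option synthInstance.maxHeartbeats 1000000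
set_option maxHeartbeats 1000000

noncomputable section

variable (V : Type) [AddCommGroup V] [Module ℝ V]

/-- The wedge product of two exterior 2-forms, landing in exterior degree 4. -/
def wedgeFun (x y : ⋀[ℝ]^2 V) : ⋀[ℝ]^4 V :=
  ⟨x.1 * y.1, by
    have h := Submodule.mul_mem_mul x.2 y.2
    rwa [← pow_add] at h⟩

/-- The wedge product `⋀²V × ⋀²V → ⋀⁴V` as a bilinear map. -/
def wedge : ⋀[ℝ]^2 V →ₗ[ℝ] ⋀[ℝ]^2 V →ₗ[ℝ] ⋀[ℝ]^4 V :=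
  LinearMap.mk₂ ℝ (wedgeFun V)
    (fun x x' y => Subtype.ext (by simp [wedgeFun, add_mul]))
    (fun c x y => Subtype.ext (by simp [wedgeFun, smul_mul_assoc]))
    (fun x y y' => Subtype.ext (by simp [wedgeFun, mul_add]))
    (fun c x y => Subtype.ext (by simp [wedgeFun, mul_smul_comm]))

/-- The complexification `⋀²V ⊗ ℂ`. -/
abbrev Lam2C := ℂ ⊗[ℝ] (⋀[ℝ]^2 V)

/-- The complexification `⋀⁴V ⊗ ℂ`. -/
abbrev Lam4C := ℂ ⊗[ℝ] (⋀[ℝ]^4 V)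

/-- The ℂ-bilinear extension of the wedge product to the complexifications. -/
def wedgeC : Lam2C V →ₗ[ℂ] Lam2C V →ₗ[ℂ] Lam4C V :=
  LinearMap.BilinMap.baseChange ℂ (wedge V)

/-- Complex conjugation on `ℂ`, as an ℝ-linear map. -/
def conjR : ℂ →ₗ[ℝ] ℂ := Complex.conjAe.toLinearMap

/-- Complex conjugation on `⋀²V ⊗ ℂ`, fixing the real points. -/
def conj2 : Lam2C V →ₗ[ℝ] Lam2C V := LinearMap.rTensor (⋀[ℝ]^2 V) conjR

/-- Complex conjugation on `⋀⁴V ⊗ ℂ`, fixing the real points. -/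
def conj4 : Lam4C V →ₗ[ℝ] Lam4C V := LinearMap.rTensor (⋀[ℝ]^4 V) conjR

/-- The canonical embedding `⋀²V → ⋀²V ⊗ ℂ` of the real points. -/
def incl2 : ⋀[ℝ]^2 V →ₗ[ℝ] Lam2C V := TensorProduct.mk ℝ ℂ (⋀[ℝ]^2 V) 1

/-- The canonical embedding `⋀⁴V → ⋀⁴V ⊗ ℂ` of the real points. -/
def incl4 : ⋀[ℝ]^4 V →ₗ[ℝ] Lam4C V := TensorProduct.mk ℝ ℂ (⋀[ℝ]^4 V) 1

/-- An even complex form on `V`. -/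
abbrev EvenFormC := ℂ × Lam2C V × Lam4C V

/-- Componentwise conjugation of even complex forms. -/
def conjE (φ : EvenFormC V) : EvenFormC V :=
  ((starRingEnd ℂ) φ.1, conj2 V φ.2.1, conj4 V φ.2.2)

/-- The Mukai pairing `⟨φ, ψ⟩ := −φ₀·ψ₄ + φ₂∧ψ₂ − φ₄·ψ₀ ∈ ⋀⁴V ⊗ ℂ`. -/
def mukai (φ ψ : EvenFormC V) : Lam4C V :=
  -(φ.1 • ψ.2.2) + wedgeC V φ.2.1 ψ.2.1 - (ψ.1 • φ.2.2)

/-- Positivity in `⋀⁴V ⊗ ℂ`, relative to a positive generator `ν` of `⋀⁴V` (an orientation):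
an element is positive iff it is real and lies in the open positive ray spanned by `ν`. -/
def PosC (ν : ⋀[ℝ]^4 V) (p : Lam4C V) : Prop :=
  ∃ c : ℝ, 0 < c ∧ p = c • incl4 V ν

/-- Positivity in `⋀⁴V`, relative to a positive generator `ν` of `⋀⁴V`. -/
def PosR (ν p : ⋀[ℝ]^4 V) : Prop :=
  ∃ c : ℝ, 0 < c ∧ p = c • ν

/- ### Auxiliary lemmas -/

open ExteriorAlgebra in
lemma aux_gen_comm (a b c : V) :
    (ι ℝ a * ι ℝ b) * ι ℝ c = ι ℝ c * (ι ℝ a * ι ℝ b) := by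
  have h : ∀ u w : V, ι ℝ u * ι ℝ w = -(ι ℝ w * ι ℝ u) := by
    intro u w
    rw [eq_neg_iff_add_eq_zero]
    exact ExteriorAlgebra.ι_add_mul_swap u w
  calc (ι ℝ a * ι ℝ b) * ι ℝ c = ι ℝ a * (ι ℝ b * ι ℝ c) := by rw [mul_assoc]
    _ = ι ℝ a * -(ι ℝ c * ι ℝ b) := by rw [h b c]
    _ = -((ι ℝ a * ι ℝ c) * ι ℝ b) := by rw [mul_neg, mul_assoc]
    _ = -(-(ι ℝ c * ι ℝ a) * ι ℝ b) := by rw [h a c]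
    _ = ι ℝ c * (ι ℝ a * ι ℝ b) := by rw [neg_mul, neg_neg, mul_assoc]

open ExteriorAlgebra in
lemma aux_lam2_comm (x y : ExteriorAlgebra ℝ V)
    (hx : x ∈ ⋀[ℝ]^2 V) (hy : y ∈ ⋀[ℝ]^2 V) : x * y = y * x := by
  rw [show (⋀[ℝ]^2 V : Submodule ℝ _) = LinearMap.range (ι ℝ : V →ₗ[ℝ] _) *
      LinearMap.range (ι ℝ : V →ₗ[ℝ] _) from sq _] at hx hy
  refine Submodule.mul_induction_on hx ?_ ?_
  · rintro m₁ ⟨a, rfl⟩ m₂ ⟨b, rfl⟩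
    refine Submodule.mul_induction_on hy ?_ ?_
    · rintro n₁ ⟨c, rfl⟩ n₂ ⟨d, rfl⟩
      calc (ι ℝ a * ι ℝ b) * (ι ℝ c * ι ℝ d)
          = ((ι ℝ a * ι ℝ b) * ι ℝ c) * ι ℝ d := (mul_assoc _ _ _).symm
        _ = (ι ℝ c * (ι ℝ a * ι ℝ b)) * ι ℝ d := by rw [aux_gen_comm]
        _ = ι ℝ c * ((ι ℝ a * ι ℝ b) * ι ℝ d) := mul_assoc _ _ _
        _ = ι ℝ c * (ι ℝ d * (ι ℝ a * ι ℝ b)) := by rw [aux_gen_comm]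
        _ = (ι ℝ c * ι ℝ d) * (ι ℝ a * ι ℝ b) := (mul_assoc _ _ _).symm
    · intro u v hu hv
      rw [mul_add, add_mul, hu, hv]
  · intro u v hu hv
    rw [mul_add, add_mul, hu, hv]

lemma aux_wedge_comm (x y : ⋀[ℝ]^2 V) : wedge V x y = wedge V y x :=
  Subtype.ext (aux_lam2_comm V x.1 y.1 x.2 y.2)

lemma aux_incl2_eq (x : ⋀[ℝ]^2 V) : incl2 V x = (1 : ℂ) ⊗ₜ[ℝ] x := rfl

lemma aux_smul_incl2 (z : ℂ) (x : ⋀[ℝ]^2 V) : z • incl2 V x = z ⊗ₜ[ℝ] x := by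
  rw [aux_incl2_eq, TensorProduct.smul_tmul', smul_eq_mul, mul_one]

lemma aux_smul_incl4 (z : ℂ) (x : ⋀[ℝ]^4 V) : z • incl4 V x = z ⊗ₜ[ℝ] x := by
  rw [show incl4 V x = (1 : ℂ) ⊗ₜ[ℝ] x from rfl, TensorProduct.smul_tmul', smul_eq_mul, mul_one]

lemma aux_conj2_smul (z : ℂ) (x : ⋀[ℝ]^2 V) :
    conj2 V (z • incl2 V x) = (starRingEnd ℂ z) • incl2 V x := by
  rw [aux_smul_incl2, aux_smul_incl2]
  simp [conj2, conjR]

lemma aux_conj4_smul (z : ℂ) (x : ⋀[ℝ]^4 V) :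
    conj4 V (z • incl4 V x) = (starRingEnd ℂ z) • incl4 V x := by
  rw [aux_smul_incl4, aux_smul_incl4]
  simp [conj4, conjR]

lemma aux_wedgeC_incl2 (x y : ⋀[ℝ]^2 V) :
    wedgeC V (incl2 V x) (incl2 V y) = incl4 V (wedge V x y) := by
  rw [aux_incl2_eq, aux_incl2_eq, show incl4 V (wedge V x y) = (1 : ℂ) ⊗ₜ[ℝ] wedge V x y from rfl]
  rw [wedgeC, LinearMap.BilinMap.baseChange_tmul, mul_one]

/-- The real-part retraction `⋀⁴V ⊗ ℂ → ⋀⁴V`. -/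
def re4 : Lam4C V →ₗ[ℝ] ⋀[ℝ]^4 V :=
  TensorProduct.lift ((LinearMap.lsmul ℝ (⋀[ℝ]^4 V)).comp Complex.reLm)

lemma aux_re4_incl4 (x : ⋀[ℝ]^4 V) : re4 V (incl4 V x) = x := by
  rw [show incl4 V x = (1 : ℂ) ⊗ₜ[ℝ] x from rfl]
  simp [re4]

lemma aux_real_smul (r : ℝ) (x : Lam4C V) : r • x = ((r : ℂ)) • x := by
  rw [← algebraMap_smul ℂ r x]
  rfl

/-- Let `φ = (φ₀, φ₂, φ₄)` be an even complex form with `φ₀ ≠ 0` and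
`⟨φ,φ⟩ = 0`, and write `φ₀⁻¹·φ₂ = B + iω` with `B, ω ∈ ⋀²V` real. Then `φ = φ₀·exp(B+iω)`,
i.e. `φ₂ = φ₀·(B+iω)` and `φ₄ = (φ₀/2)·(B+iω)∧(B+iω)`; moreover
`⟨φ,φ̄⟩ = 2·|φ₀|²·(ω∧ω)`, so that `⟨φ,φ̄⟩ > 0` if and only if `ω∧ω > 0` (with respect to any
orientation `ν` of `⋀⁴V`). -/
theorem evenForm_of_phi0_ne_zero
    (V : Type) [AddCommGroup V] [Module ℝ V] [FiniteDimensional ℝ V]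
    (hdim : Module.finrank ℝ V = 4)
    (φ : EvenFormC V) (hφ0 : φ.1 ≠ 0)
    (hiso : mukai V φ φ = 0)
    (B ω : ⋀[ℝ]^2 V)
    (hBω : φ.1⁻¹ • φ.2.1 = incl2 V B + Complex.I • incl2 V ω) :
    φ.2.1 = φ.1 • (incl2 V B + Complex.I • incl2 V ω) ∧
    φ.2.2 = (φ.1 / 2) • wedgeC V (incl2 V B + Complex.I • incl2 V ω)
      (incl2 V B + Complex.I • incl2 V ω) ∧
    mukai V φ (conjE V φ) = (2 * Complex.normSq φ.1) • incl4 V (wedge V ω ω) ∧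
    (∀ ν : ⋀[ℝ]^4 V, ν ≠ 0 →
      (PosC V ν (mukai V φ (conjE V φ)) ↔ PosR V ν (wedge V ω ω))) := by
  set E : Lam2C V := incl2 V B + Complex.I • incl2 V ω with hE
  -- first assertion
  have h2 : φ.2.1 = φ.1 • E := by
    have := congrArg (fun t => φ.1 • t) hBω
    simpa [smul_smul, mul_inv_cancel₀ hφ0] using this
  -- expansion of wedgeC E E
  have hWE : wedgeC V E E =
      incl4 V (wedge V B B) + (2 * Complex.I) • incl4 V (wedge V B ω)
        - incl4 V (wedge V ω ω) := by
    rw [hE]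
    simp only [map_add, map_smul, LinearMap.add_apply, LinearMap.smul_apply,
      aux_wedgeC_incl2, smul_smul]
    rw [aux_wedge_comm V ω B]
    match_scalars
    all_goals (ring_nf; try simp only [Complex.I_sq]; try ring_nf)
  -- second assertion
  have h4 : φ.2.2 = (φ.1 / 2) • wedgeC V E E := by
    have h1 : wedgeC V φ.2.1 φ.2.1 = φ.1 • φ.2.2 + φ.1 • φ.2.2 := by
      have h := hiso
      rw [mukai] at h
      have h' := congrArg (fun t => t + (φ.1 • φ.2.2 + φ.1 • φ.2.2)) h
      simp only [zero_add] at h'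
      rw [← h']
      abel
    have h0 : wedgeC V φ.2.1 φ.2.1 = (2 * φ.1) • φ.2.2 := by
      rw [h1, ← add_smul, ← two_mul]
    have h2' : wedgeC V φ.2.1 φ.2.1 = (φ.1 * φ.1) • wedgeC V E E := by
      rw [h2]
      simp only [map_smul, LinearMap.smul_apply, smul_smul]
    have h2z : (2 * φ.1) ≠ 0 := by simp [hφ0]
    have hfin := congrArg (fun t => (2 * φ.1)⁻¹ • t) (h0.symm.trans h2')
    simp only [smul_smul, inv_mul_cancel₀ h2z, one_smul] at hfin
    rw [hfin]
    congr 1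
    field_simp
  refine ⟨h2, h4, ?_⟩
  -- conjugates
  have hc2 : conj2 V φ.2.1 =
      (starRingEnd ℂ φ.1) • incl2 V B + (starRingEnd ℂ (φ.1 * Complex.I)) • incl2 V ω := by
    rw [h2, hE, smul_add, smul_smul, map_add, aux_conj2_smul, aux_conj2_smul]
  have hc4 : conj4 V φ.2.2 =
      (starRingEnd ℂ (φ.1 / 2)) • incl4 V (wedge V B B)
        + (starRingEnd ℂ (φ.1 / 2 * (2 * Complex.I))) • incl4 V (wedge V B ω)
        - (starRingEnd ℂ (φ.1 / 2)) • incl4 V (wedge V ω ω) := by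
    rw [h4, hWE, smul_sub, smul_add, smul_smul, map_sub, map_add,
      aux_conj4_smul, aux_conj4_smul, aux_conj4_smul]
  -- the key algebraic identity
  have h3 : mukai V φ (conjE V φ) =
      (2 * Complex.normSq φ.1) • incl4 V (wedge V ω ω) := by
    rw [mukai, conjE]
    simp only
    rw [hc2, hc4, h2, hE, h4, hWE]
    simp only [map_add, map_smul, LinearMap.add_apply, LinearMap.smul_apply,
      aux_wedgeC_incl2, smul_smul, smul_sub, smul_add]
    rw [aux_wedge_comm V ω B]
    rw [aux_real_smul]
    push_cast
    rw [show ((Complex.normSq φ.1 : ℂ)) = φ.1 * (starRingEnd ℂ φ.1) from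
      (Complex.mul_conj φ.1).symm]
    simp only [map_mul, map_div₀, Complex.conj_I, map_ofNat]
    match_scalars
    all_goals (ring_nf; try simp only [Complex.I_sq]; try ring_nf)
  refine ⟨h3, ?_⟩
  -- positivity
  have ha : (0 : ℝ) < 2 * Complex.normSq φ.1 := by
    have := Complex.normSq_pos.mpr hφ0
    linarith
  intro ν hν
  constructor
  · rintro ⟨c, hc, hp⟩
    rw [h3] at hp
    have hre := congrArg (re4 V) hp
    rw [map_smul, map_smul, aux_re4_incl4, aux_re4_incl4] at hre
    refine ⟨(2 * Complex.normSq φ.1)⁻¹ * c, by positivity, ?_⟩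
    rw [← smul_smul, ← hre, smul_smul, inv_mul_cancel₀ (ne_of_gt ha), one_smul]
  · rintro ⟨c, hc, hp⟩
    refine ⟨2 * Complex.normSq φ.1 * c, by positivity, ?_⟩
    rw [h3, hp, map_smul, smul_smul]

end
end

section
/- Let σ be an alternating ℂ-bilinear form on V_ℂ with σ∧σ = 0 and σ∧σ̄ ≠ 0. Then K := {v ∈ V_ℂ : σ(v,w) = 0 for all w ∈ V_ℂ} is a 2-dimensional complex subspace with K ∩ K̄ = 0, so V_ℂ = K ⊕ K̄; consequently there is a unique ℝ-linear endomorphism J of V with J∘J = −id_V whose (+i)-eigenspace in V_ℂ equals K (a complex structure on V for which σ is of type (2,0)). -/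
/-!
The Plücker relation `σ ∧ σ = 0` says that `σ` is decomposable: if `σ(a, b) ≠ 0`, then
`K = ker σ` is the common kernel of `σ(·, a)` and `σ(·, b)`, so it has codimension two.
The same holds for `σ̄`, whose kernel is `K̄`. A nonzero `x ∈ K ∩ K̄` would be a common null
vector of `σ` and `σ̄`; modulo `x` any four vectors are dependent, so `σ ∧ σ̄` would vanish.
Hence `V_ℂ = K ⊕ K̄`. The operator acting by `i` on `K` and by `-i` on `K̄` commutes with
conjugation, so it is the complexification of a real `J`; any such `J` is determined by the
eigenspace condition on `K` and, after conjugation, on `K̄`.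
-/

open scoped TensorProduct

set_option synthInstance.maxHeartbeats 1000000
set_option maxHeartbeats 1000000

noncomputable section

variable (V : Type) [AddCommGroup V] [Module ℝ V]

/-- The complexification `V_ℂ = ℂ ⊗ V`. -/
abbrev VC := ℂ ⊗[ℝ] V

/-- Complex conjugation on `V_ℂ`, fixing the real points `V`. -/
def cV : VC V →ₗ[ℝ] VC V := LinearMap.rTensor V conjR

/-- The value of the wedge product `a∧b ∈ ⋀⁴((V_ℂ)*)` of two alternating bilinear forms,
evaluated at `(v₁,v₂,v₃,v₄)`. -/
def wedge4 (a b : VC V → VC V → ℂ) (v₁ v₂ v₃ v₄ : VC V) : ℂ :=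
  a v₁ v₂ * b v₃ v₄ - a v₁ v₃ * b v₂ v₄ + a v₁ v₄ * b v₂ v₃
    + a v₂ v₃ * b v₁ v₄ - a v₂ v₄ * b v₁ v₃ + a v₃ v₄ * b v₁ v₂

open Module LinearMap

section Wedge

variable {𝕜 M : Type*} [Field 𝕜] [AddCommGroup M] [Module 𝕜 M]

-- `wedge4` for forms on an arbitrary module; on `VC V` the two agree definitionally.
def wedgeApply (s t : M →ₗ[𝕜] M →ₗ[𝕜] 𝕜) (v₁ v₂ v₃ v₄ : M) : 𝕜 :=
  s v₁ v₂ * t v₃ v₄ - s v₁ v₃ * t v₂ v₄ + s v₁ v₄ * t v₂ v₃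
    + s v₂ v₃ * t v₁ v₄ - s v₂ v₄ * t v₁ v₃ + s v₃ v₄ * t v₁ v₂

theorem wedgeApply_self (s : M →ₗ[𝕜] M →ₗ[𝕜] 𝕜) (v₁ v₂ v₃ v₄ : M) :
    wedgeApply s s v₁ v₂ v₃ v₄ =
      2 * (s v₁ v₂ * s v₃ v₄ - s v₁ v₃ * s v₂ v₄ + s v₁ v₄ * s v₂ v₃) := by
  unfold wedgeApply; ring

theorem finrank_ker_add_two_of_wedgeApply_self_eq_zero [NeZero (2 : 𝕜)] [FiniteDimensional 𝕜 M]
    {τ : M →ₗ[𝕜] M →ₗ[𝕜] 𝕜} (hτ : τ.IsAlt) (hττ : ∀ v₁ v₂ v₃ v₄, wedgeApply τ τ v₁ v₂ v₃ v₄ = 0)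
    (hne : τ ≠ 0) : finrank 𝕜 (ker τ) + 2 = finrank 𝕜 M := by
  have hpl (v₁ v₂ v₃ v₄ : M) :
      τ v₁ v₂ * τ v₃ v₄ - τ v₁ v₃ * τ v₂ v₄ + τ v₁ v₄ * τ v₂ v₃ = 0 := by
    simpa [wedgeApply_self, two_ne_zero] using hττ v₁ v₂ v₃ v₄
  -- By Plücker, `ker τ` is the kernel of the surjection `v ↦ (τ v a, τ v b)` for any `τ a b ≠ 0`.
  obtain ⟨a, b, hab⟩ : ∃ a b, τ a b ≠ 0 := by
    by_contra! h
    exact hne (LinearMap.ext₂ h)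
  set L : M →ₗ[𝕜] 𝕜 × 𝕜 := (τ.flip a).prod (τ.flip b)
  have hker : ker L = ker τ := by
    ext v
    simp only [L, mem_ker, prod_apply, Function.prod, flip_apply, Prod.mk_eq_zero]
    refine ⟨fun ⟨ha, hb⟩ => LinearMap.ext fun w => ?_, fun hv => by simp [hv]⟩
    have h := hpl v w a b
    rw [ha, hb] at h
    simpa [hab] using h
  have hrange : range L = ⊤ := by
    refine range_eq_top.mpr fun p => ⟨(p.2 / τ a b) • a - (p.1 / τ a b) • b, ?_⟩
    ext <;> simp [L, hτ.self_eq_zero, ← hτ.neg a b, hab]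
  have h := finrank_range_add_finrank_ker L
  rwa [hker, hrange, finrank_top, finrank_prod, finrank_self, add_comm] at h

section Vanishing

variable {s t : M →ₗ[𝕜] M →ₗ[𝕜] 𝕜}

theorem wedgeApply_add_left (u u' v₂ v₃ v₄ : M) :
    wedgeApply s t (u + u') v₂ v₃ v₄ = wedgeApply s t u v₂ v₃ v₄ + wedgeApply s t u' v₂ v₃ v₄ := by
  simp only [wedgeApply, map_add, LinearMap.add_apply]; ring

theorem wedgeApply_smul_left (c : 𝕜) (u v₂ v₃ v₄ : M) :
    wedgeApply s t (c • u) v₂ v₃ v₄ = c * wedgeApply s t u v₂ v₃ v₄ := by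
  simp only [wedgeApply, map_smul, LinearMap.smul_apply, smul_eq_mul]; ring

theorem wedgeApply_eq_zero_of_mem_ker_inf {y : M} (hy : y ∈ ker s ⊓ ker t) (v₂ v₃ v₄ : M) :
    wedgeApply s t y v₂ v₃ v₄ = 0 := by
  simp_all [wedgeApply]

variable (hs : s.IsAlt) (ht : t.IsAlt)
include hs ht

theorem wedgeApply_self₁₂ (v v₃ v₄ : M) : wedgeApply s t v v v₃ v₄ = 0 := by
  simp only [wedgeApply, hs.self_eq_zero, ht.self_eq_zero]; ring

theorem wedgeApply_self₁₃ (v v₂ v₄ : M) : wedgeApply s t v v₂ v v₄ = 0 := by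
  simp only [wedgeApply, hs.self_eq_zero, ht.self_eq_zero, ← hs.neg v₂ v, ← ht.neg v₂ v]; ring

theorem wedgeApply_self₁₄ (v v₂ v₃ : M) : wedgeApply s t v v₂ v₃ v = 0 := by
  simp only [wedgeApply, hs.self_eq_zero, ht.self_eq_zero, ← hs.neg v₂ v, ← ht.neg v₂ v,
    ← hs.neg v₃ v, ← ht.neg v₃ v]; ring

theorem wedgeApply_swap₁₂ (v₁ v₂ v₃ v₄ : M) :
    wedgeApply s t v₂ v₁ v₃ v₄ = -wedgeApply s t v₁ v₂ v₃ v₄ := by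
  simp only [wedgeApply, ← hs.neg v₁ v₂, ← ht.neg v₁ v₂]; ring

theorem wedgeApply_swap₁₃ (v₁ v₂ v₃ v₄ : M) :
    wedgeApply s t v₃ v₂ v₁ v₄ = -wedgeApply s t v₁ v₂ v₃ v₄ := by
  simp only [wedgeApply, ← hs.neg v₁ v₂, ← ht.neg v₁ v₂, ← hs.neg v₁ v₃, ← ht.neg v₁ v₃,
    ← hs.neg v₂ v₃, ← ht.neg v₂ v₃]; ring

theorem wedgeApply_swap₁₄ (v₁ v₂ v₃ v₄ : M) :
    wedgeApply s t v₄ v₂ v₃ v₁ = -wedgeApply s t v₁ v₂ v₃ v₄ := by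
  simp only [wedgeApply, ← hs.neg v₁ v₂, ← ht.neg v₁ v₂, ← hs.neg v₁ v₃, ← ht.neg v₁ v₃,
    ← hs.neg v₁ v₄, ← ht.neg v₁ v₄, ← hs.neg v₂ v₄, ← ht.neg v₂ v₄, ← hs.neg v₃ v₄,
    ← ht.neg v₃ v₄]; ring

theorem wedgeApply_eq_zero_of_combination_mem {v₁ v₂ v₃ v₄ : M} {g₁ g₂ g₃ g₄ : 𝕜} (hg₁ : g₁ ≠ 0)
    (hy : g₁ • v₁ + g₂ • v₂ + g₃ • v₃ + g₄ • v₄ ∈ ker s ⊓ ker t) :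
    wedgeApply s t v₁ v₂ v₃ v₄ = 0 := by
  have h := wedgeApply_eq_zero_of_mem_ker_inf hy v₂ v₃ v₄
  simp only [wedgeApply_add_left, wedgeApply_smul_left, wedgeApply_self₁₂ hs ht,
    wedgeApply_self₁₃ hs ht, wedgeApply_self₁₄ hs ht, mul_zero, add_zero] at h
  simpa [hg₁] using h

theorem wedgeApply_eq_zero_of_ker_inf_ne_bot [FiniteDimensional 𝕜 M] (hM : finrank 𝕜 M ≤ 4)
    (hst : ker s ⊓ ker t ≠ ⊥) (v₁ v₂ v₃ v₄ : M) : wedgeApply s t v₁ v₂ v₃ v₄ = 0 := by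
  -- The four vectors become dependent modulo a common null vector `x`.
  obtain ⟨x, hx, hx0⟩ := (Submodule.ne_bot_iff _).mp hst
  have hQ : finrank 𝕜 (M ⧸ 𝕜 ∙ x) < Fintype.card (Fin 4) := by
    have := (𝕜 ∙ x).finrank_quotient_add_finrank
    rw [finrank_span_singleton hx0] at this
    simp only [Fintype.card_fin]; omega
  obtain ⟨g, hg, i, hgi⟩ := Fintype.not_linearIndependent_iff.mp fun h =>
    hQ.not_ge (h.fintype_card_le_finrank (b := fun j => (𝕜 ∙ x).mkQ (![v₁, v₂, v₃, v₄] j)))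
  have hmem : ∑ j, g j • ![v₁, v₂, v₃, v₄] j ∈ ker s ⊓ ker t := by
    refine (Submodule.span_singleton_le_iff_mem x _).mpr hx ?_
    rw [← (𝕜 ∙ x).ker_mkQ, mem_ker, map_sum]
    simpa only [map_smul] using hg
  simp only [Fin.sum_univ_four, Matrix.cons_val] at hmem
  fin_cases i <;> simp only [Fin.zero_eta, Fin.mk_one, Fin.reduceFinMk] at hgi
  · exact wedgeApply_eq_zero_of_combination_mem hs ht hgi hmem
  · rw [← neg_eq_zero, ← wedgeApply_swap₁₂ hs ht]
    exact wedgeApply_eq_zero_of_combination_mem hs ht hgi (by convert hmem using 1; abel)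
  · rw [← neg_eq_zero, ← wedgeApply_swap₁₃ hs ht]
    exact wedgeApply_eq_zero_of_combination_mem hs ht hgi (by convert hmem using 1; abel)
  · rw [← neg_eq_zero, ← wedgeApply_swap₁₄ hs ht]
    exact wedgeApply_eq_zero_of_combination_mem hs ht hgi (by convert hmem using 1; abel)

end Vanishing

end Wedge

section Conjugation

variable {V}

@[simp]
theorem cV_tmul (c : ℂ) (v : V) : cV V (c ⊗ₜ v) = (starRingEnd ℂ) c ⊗ₜ v := rfl

@[simp]
theorem cV_cV (x : VC V) : cV V (cV V x) = x := by
  induction x using TensorProduct.induction_on with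
  | zero => simp
  | tmul c v => simp
  | add a b ha hb => simp only [map_add, ha, hb]

theorem cV_smul (z : ℂ) (x : VC V) : cV V (z • x) = (starRingEnd ℂ) z • cV V x := by
  induction x using TensorProduct.induction_on with
  | zero => simp
  | tmul c v => simp [TensorProduct.smul_tmul']
  | add a b ha hb => simp only [smul_add, map_add, ha, hb]

theorem mem_span_image_cV_iff {K : Submodule ℂ (VC V)} {x : VC V} :
    x ∈ Submodule.span ℂ (cV V '' K) ↔ cV V x ∈ K := by
  refine ⟨fun hx => ?_, fun hx => cV_cV x ▸ Submodule.subset_span ⟨_, hx, rfl⟩⟩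
  induction hx using Submodule.span_induction with
  | mem y hy => obtain ⟨u, hu, rfl⟩ := hy; simpa using hu
  | zero => simp
  | add y z _ _ hy hz => simpa using K.add_mem hy hz
  | smul c y _ hy => simpa [cV_smul] using K.smul_mem _ hy

def conjForm (σ : VC V →ₗ[ℂ] VC V →ₗ[ℂ] ℂ) : VC V →ₗ[ℂ] VC V →ₗ[ℂ] ℂ :=
  LinearMap.mk₂ ℂ (fun v w => (starRingEnd ℂ) (σ (cV V v) (cV V w)))
    (fun _ _ _ => by simp)
    (fun _ _ _ => by simp [cV_smul])
    (fun _ _ _ => by simp)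
    (fun _ _ _ => by simp [cV_smul])

variable {σ : VC V →ₗ[ℂ] VC V →ₗ[ℂ] ℂ}

@[simp]
theorem conjForm_apply (v w : VC V) :
    conjForm σ v w = (starRingEnd ℂ) (σ (cV V v) (cV V w)) := rfl

theorem LinearMap.IsAlt.conjForm (hσ : σ.IsAlt) : (conjForm σ).IsAlt := fun v => by
  simp [hσ.self_eq_zero]

theorem conjForm_ne_zero (hσ : σ ≠ 0) : conjForm σ ≠ 0 := by
  refine fun h => hσ (LinearMap.ext₂ fun v w => ?_)
  simpa using congr($h (cV V v) (cV V w))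

theorem wedgeApply_conjForm (τ : VC V →ₗ[ℂ] VC V →ₗ[ℂ] ℂ) (v₁ v₂ v₃ v₄ : VC V) :
    wedgeApply (conjForm σ) (conjForm τ) v₁ v₂ v₃ v₄ =
      (starRingEnd ℂ) (wedgeApply σ τ (cV V v₁) (cV V v₂) (cV V v₃) (cV V v₄)) := by
  simp [wedgeApply]

theorem ker_conjForm : ker (conjForm σ) = Submodule.span ℂ (cV V '' ker σ) := by
  ext x
  rw [mem_span_image_cV_iff, mem_ker, mem_ker]
  refine ⟨fun h => LinearMap.ext fun w => ?_, fun h => LinearMap.ext fun w => by simp [h]⟩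
  simpa using congr($h (cV V w))

end Conjugation

section RealStructure

variable {V}

def reV : VC V →ₗ[ℝ] V := TensorProduct.lift (LinearMap.lsmul ℝ V ∘ₗ Complex.reLm)

@[simp]
theorem reV_tmul (c : ℂ) (v : V) : reV (c ⊗ₜ v) = c.re • v := rfl

theorem two_smul_one_tmul_reV (x : VC V) : (2 : ℝ) • ((1 : ℂ) ⊗ₜ[ℝ] reV x) = x + cV V x := by
  induction x using TensorProduct.induction_on with
  | zero => simp
  | tmul c v =>
    rw [reV_tmul, cV_tmul, ← TensorProduct.add_tmul, Complex.add_conj, ← TensorProduct.smul_tmul,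
      TensorProduct.smul_tmul', smul_smul, Complex.real_smul, mul_one]
  | add a b ha hb => rw [map_add, TensorProduct.tmul_add, smul_add, ha, hb, map_add]; abel

theorem one_tmul_reV_of_cV_eq {x : VC V} (hx : cV V x = x) : (1 : ℂ) ⊗ₜ[ℝ] reV x = x := by
  have h := two_smul_one_tmul_reV x
  rw [hx, ← two_smul ℝ x] at h
  exact smul_right_injective _ two_ne_zero h

theorem cV_baseChange (J : V →ₗ[ℝ] V) (x : VC V) :
    cV V (J.baseChange ℂ x) = J.baseChange ℂ (cV V x) := by
  induction x using TensorProduct.induction_on with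
  | zero => simp
  | tmul c v => simp
  | add a b ha hb => simp only [map_add, ha, hb]

theorem baseChange_injective :
    Function.Injective (LinearMap.baseChange ℂ : (V →ₗ[ℝ] V) → VC V →ₗ[ℂ] VC V) := by
  intro J J' h
  ext v
  simpa using congr(reV ($h ((1 : ℂ) ⊗ₜ v)))

theorem exists_baseChange_eq_of_commute_cV (F : VC V →ₗ[ℂ] VC V)
    (hF : ∀ x, F (cV V x) = cV V (F x)) : ∃ J : V →ₗ[ℝ] V, J.baseChange ℂ = F := by
  refine ⟨reV ∘ₗ F.restrictScalars ℝ ∘ₗ TensorProduct.mk ℝ ℂ V 1,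
    TensorProduct.AlgebraTensorModule.ext fun c v => ?_⟩
  have hreal : cV V (F ((1 : ℂ) ⊗ₜ v)) = F ((1 : ℂ) ⊗ₜ v) := by rw [← hF]; simp
  rw [LinearMap.baseChange_tmul, ← mul_one c, ← smul_eq_mul, ← TensorProduct.smul_tmul',
    ← TensorProduct.smul_tmul', map_smul]
  simpa using congr(c • $(one_tmul_reV_of_cV_eq hreal))

end RealStructure

section ComplexStructure

variable {V} {K : Submodule ℂ (VC V)} (hK : IsCompl K (Submodule.span ℂ (cV V '' K)))

def complexifiedJ : VC V →ₗ[ℂ] VC V :=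
  LinearMap.ofIsCompl hK (Complex.I • K.subtype) (-Complex.I • (Submodule.span ℂ _).subtype)

include hK

theorem complexifiedJ_of_mem_left {x : VC V} (hx : x ∈ K) :
    complexifiedJ hK x = Complex.I • x :=
  LinearMap.ofIsCompl_apply_left hK ⟨x, hx⟩

theorem complexifiedJ_of_mem_right {x : VC V} (hx : x ∈ Submodule.span ℂ (cV V '' K)) :
    complexifiedJ hK x = -Complex.I • x :=
  LinearMap.ofIsCompl_apply_right hK ⟨x, hx⟩

theorem complexifiedJ_cV (x : VC V) : complexifiedJ hK (cV V x) = cV V (complexifiedJ hK x) := by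
  obtain ⟨⟨k, hk⟩, ⟨k', hk'⟩, rfl, -⟩ := Submodule.existsUnique_add_of_isCompl hK x
  have hk₁ : cV V k ∈ Submodule.span ℂ (cV V '' K) := Submodule.subset_span ⟨k, hk, rfl⟩
  have hk'₁ : cV V k' ∈ K := mem_span_image_cV_iff.mp hk'
  simp only [map_add, complexifiedJ_of_mem_left hK hk, complexifiedJ_of_mem_right hK hk',
    complexifiedJ_of_mem_left hK hk'₁, complexifiedJ_of_mem_right hK hk₁, cV_smul, map_neg,
    Complex.conj_I, neg_neg, add_comm]

theorem complexifiedJ_comp_self : complexifiedJ hK ∘ₗ complexifiedJ hK = -LinearMap.id := by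
  refine LinearMap.ext_on_codisjoint hK.codisjoint (fun x hx => ?_) (fun x hx => ?_)
  · simp [complexifiedJ_of_mem_left hK hx, smul_smul]
  · simp [complexifiedJ_of_mem_right hK hx, smul_smul]

theorem eigenspace_complexifiedJ : Module.End.eigenspace (complexifiedJ hK) Complex.I = K := by
  refine le_antisymm (fun x hx => ?_) (fun x hx => ?_)
  · obtain ⟨⟨k, hk⟩, ⟨k', hk'⟩, rfl, -⟩ := Submodule.existsUnique_add_of_isCompl hK x
    rw [Module.End.mem_eigenspace_iff, map_add, complexifiedJ_of_mem_left hK hk,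
      complexifiedJ_of_mem_right hK hk', smul_add, add_right_inj, neg_smul, neg_eq_iff_add_eq_zero,
      ← two_smul ℂ, smul_smul, smul_eq_zero] at hx
    simpa [hx.resolve_left (by simp)] using hk
  · exact Module.End.mem_eigenspace_iff.mpr (complexifiedJ_of_mem_left hK hx)

theorem baseChange_eq_complexifiedJ {J : V →ₗ[ℝ] V}
    (hJ : Module.End.eigenspace (J.baseChange ℂ) Complex.I = K) :
    J.baseChange ℂ = complexifiedJ hK := by
  have hJK {x : VC V} (hx : x ∈ K) : J.baseChange ℂ x = Complex.I • x :=
    Module.End.mem_eigenspace_iff.mp (hJ ▸ hx)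
  refine LinearMap.ext_on_codisjoint hK.codisjoint (fun x hx => ?_) (fun x hx => ?_)
  · rw [hJK hx, complexifiedJ_of_mem_left hK hx]
  · rw [complexifiedJ_of_mem_right hK hx, ← cV_cV (J.baseChange ℂ x), cV_baseChange,
      hJK (mem_span_image_cV_iff.mp hx), cV_smul, cV_cV, Complex.conj_I]

theorem existsUnique_complexStructure_of_isCompl :
    ∃! J : V →ₗ[ℝ] V, J ∘ₗ J = -LinearMap.id ∧
      Module.End.eigenspace (J.baseChange ℂ) Complex.I = K := by
  obtain ⟨J, hJ⟩ := exists_baseChange_eq_of_commute_cV _ (complexifiedJ_cV hK)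
  refine ⟨J, ⟨baseChange_injective ?_, hJ ▸ eigenspace_complexifiedJ hK⟩,
    fun J' ⟨_, hJ'⟩ => baseChange_injective ?_⟩
  · rw [LinearMap.baseChange_comp, LinearMap.baseChange_neg, LinearMap.baseChange_id, hJ,
      complexifiedJ_comp_self]
  · rw [hJ, baseChange_eq_complexifiedJ hK hJ']

end ComplexStructure

theorem complex_structure_of_gcy_two_form_general
    (V : Type) [AddCommGroup V] [Module ℝ V]
    (hdim : Module.finrank ℝ V = 4)
    (σ : VC V →ₗ[ℂ] VC V →ₗ[ℂ] ℂ)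
    (halt : ∀ v : VC V, σ v v = 0)
    (hσσ : ∀ v₁ v₂ v₃ v₄ : VC V,
      wedge4 V (fun v w => σ v w) (fun v w => σ v w) v₁ v₂ v₃ v₄ = 0)
    (hσσbar : ∃ v₁ v₂ v₃ v₄ : VC V,
      wedge4 V (fun v w => σ v w)
        (fun v w => (starRingEnd ℂ) (σ (cV V v) (cV V w))) v₁ v₂ v₃ v₄ ≠ 0) :
    Module.finrank ℂ (LinearMap.ker σ) = 2 ∧
    LinearMap.ker σ ⊓ Submodule.span ℂ (cV V '' (LinearMap.ker σ : Set (VC V))) = ⊥ ∧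
    IsCompl (LinearMap.ker σ) (Submodule.span ℂ (cV V '' (LinearMap.ker σ : Set (VC V)))) ∧
    (∃! J : V →ₗ[ℝ] V, J ∘ₗ J = -LinearMap.id ∧
      Module.End.eigenspace (LinearMap.baseChange ℂ J) Complex.I = LinearMap.ker σ) := by
  have hdimC : finrank ℂ (VC V) = 4 := by rw [finrank_baseChange, hdim]
  have : FiniteDimensional ℂ (VC V) := Module.finite_of_finrank_pos (by omega)
  obtain ⟨v₁, v₂, v₃, v₄, hwedge⟩ := hσσbar
  have hσ0 : σ ≠ 0 := by
    rintro rfl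
    exact hwedge (by simp [wedge4])
  have hconj (w₁ w₂ w₃ w₄ : VC V) : wedgeApply (conjForm σ) (conjForm σ) w₁ w₂ w₃ w₄ = 0 := by
    rw [wedgeApply_conjForm, show wedgeApply σ σ _ _ _ _ = 0 from hσσ .., map_zero]
  have hσ : σ.IsAlt := halt
  have hrank := finrank_ker_add_two_of_wedgeApply_self_eq_zero hσ hσσ hσ0
  have hrank' :=
    finrank_ker_add_two_of_wedgeApply_self_eq_zero hσ.conjForm hconj (conjForm_ne_zero hσ0)
  rw [ker_conjForm] at hrank'
  have hdisj : ker σ ⊓ Submodule.span ℂ (cV V '' ker σ) = ⊥ := by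
    rw [← ker_conjForm]
    by_contra h
    exact hwedge (wedgeApply_eq_zero_of_ker_inf_ne_bot hσ hσ.conjForm hdimC.le h v₁ v₂ v₃ v₄)
  have hcompl : IsCompl (ker σ) (Submodule.span ℂ (cV V '' ker σ)) :=
    (Submodule.isCompl_iff_disjoint _ _ (by omega)).mpr (disjoint_iff.mpr hdisj)
  exact ⟨by omega, hdisj, hcompl, existsUnique_complexStructure_of_isCompl hcompl⟩

/-- Let `σ` be an alternating ℂ-bilinear form on `V_ℂ` with `σ∧σ = 0` and
`σ∧σ̄ ≠ 0`. Then `K := {v : ∀ w, σ(v,w) = 0}` is a 2-dimensional complex subspace with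
`K ⊓ K̄ = ⊥` and `V_ℂ = K ⊕ K̄`; and there is a unique ℝ-linear `J : V → V` with
`J∘J = −id` whose `(+i)`-eigenspace in `V_ℂ` equals `K`. -/
theorem complex_structure_of_gcy_two_form
    (V : Type) [AddCommGroup V] [Module ℝ V] [FiniteDimensional ℝ V]
    (hdim : Module.finrank ℝ V = 4)
    (σ : VC V →ₗ[ℂ] VC V →ₗ[ℂ] ℂ)
    (halt : ∀ v : VC V, σ v v = 0)
    (hσσ : ∀ v₁ v₂ v₃ v₄ : VC V,
      wedge4 V (fun v w => σ v w) (fun v w => σ v w) v₁ v₂ v₃ v₄ = 0)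
    (hσσbar : ∃ v₁ v₂ v₃ v₄ : VC V,
      wedge4 V (fun v w => σ v w)
        (fun v w => (starRingEnd ℂ) (σ (cV V v) (cV V w))) v₁ v₂ v₃ v₄ ≠ 0) :
    Module.finrank ℂ (LinearMap.ker σ) = 2 ∧
    LinearMap.ker σ ⊓ Submodule.span ℂ (cV V '' (LinearMap.ker σ : Set (VC V))) = ⊥ ∧
    IsCompl (LinearMap.ker σ) (Submodule.span ℂ (cV V '' (LinearMap.ker σ : Set (VC V)))) ∧
    (∃! J : V →ₗ[ℝ] V, J ∘ₗ J = -LinearMap.id ∧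
      Module.End.eigenspace (LinearMap.baseChange ℂ J) Complex.I = LinearMap.ker σ) :=
  complex_structure_of_gcy_two_form_general V hdim σ halt hσσ hσσbar

end
end

section
/- Let ω, ω', B' ∈ ⋀²V with ω∧ω > 0 satisfy B'∧ω = 0, ω'∧ω = 0, B'∧ω' = 0, B'∧B' = ω∧ω + ω'∧ω', and additionally ω∧ω = ω'∧ω'. Then the complex two-form σ := (1/√2)·B' + i·ω' ∈ ⋀²V ⊗ ℂ satisfies σ∧σ = 0, σ∧ω = 0, and σ∧σ̄ = 2·(ω∧ω) > 0. (Hence σ defines a complex structure with respect to which ±ω is pointwise a hyperkähler form.) -/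
/-!
Statement 10: Let ω, ω', B' ∈ ⋀²V with ω∧ω > 0 satisfy B'∧ω = 0, ω'∧ω = 0, B'∧ω' = 0,
B'∧B' = ω∧ω + ω'∧ω', and additionally ω∧ω = ω'∧ω'. Then σ := (1/√2)·B' + i·ω' ∈ ⋀²V ⊗ ℂ
satisfies σ∧σ = 0, σ∧ω = 0, and σ∧σ̄ = 2·(ω∧ω) > 0.
-/

open scoped TensorProduct

set_option synthInstance.maxHeartbeats 1000000
set_option maxHeartbeats 1000000

noncomputable section

variable (V : Type) [AddCommGroup V] [Module ℝ V]

lemma deg1_comm_deg2 (V : Type) [AddCommGroup V] [Module ℝ V] (u v w : V) :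
    ExteriorAlgebra.ι ℝ w * (ExteriorAlgebra.ι ℝ u * ExteriorAlgebra.ι ℝ v)
      = (ExteriorAlgebra.ι ℝ u * ExteriorAlgebra.ι ℝ v) * ExteriorAlgebra.ι ℝ w := by
  have e1 : ExteriorAlgebra.ι ℝ w * ExteriorAlgebra.ι ℝ u
      = - (ExteriorAlgebra.ι ℝ u * ExteriorAlgebra.ι ℝ w) :=
    eq_neg_of_add_eq_zero_left (ExteriorAlgebra.ι_add_mul_swap w u)
  have e2 : ExteriorAlgebra.ι ℝ w * ExteriorAlgebra.ι ℝ v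
      = - (ExteriorAlgebra.ι ℝ v * ExteriorAlgebra.ι ℝ w) :=
    eq_neg_of_add_eq_zero_left (ExteriorAlgebra.ι_add_mul_swap w v)
  rw [← mul_assoc, e1, neg_mul, mul_assoc, e2, mul_neg, neg_neg, ← mul_assoc]

lemma deg2_mul_comm (V : Type) [AddCommGroup V] [Module ℝ V] (x y : ExteriorAlgebra ℝ V)
    (hx : x ∈ (LinearMap.range (ExteriorAlgebra.ι ℝ : V →ₗ[ℝ] ExteriorAlgebra ℝ V)) ^ 2)
    (hy : y ∈ (LinearMap.range (ExteriorAlgebra.ι ℝ : V →ₗ[ℝ] ExteriorAlgebra ℝ V)) ^ 2) :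
    x * y = y * x := by
  rw [pow_two] at hx hy
  induction hx using Submodule.mul_induction_on' with
  | mem_mul_mem a ha b hb =>
    obtain ⟨u, rfl⟩ := ha
    obtain ⟨v, rfl⟩ := hb
    induction hy using Submodule.mul_induction_on' with
    | mem_mul_mem c hc d hd =>
      obtain ⟨w, rfl⟩ := hc
      obtain ⟨z, rfl⟩ := hd
      rw [← mul_assoc, ← deg1_comm_deg2, mul_assoc, ← deg1_comm_deg2, ← mul_assoc]
    | add y₁ hy₁ y₂ hy₂ ih1 ih2 => rw [mul_add, add_mul, ih1, ih2]
  | add x₁ hx₁ x₂ hx₂ ih1 ih2 => rw [add_mul, mul_add, ih1, ih2]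

lemma wedge_comm' (V : Type) [AddCommGroup V] [Module ℝ V] (x y : ⋀[ℝ]^2 V) :
    wedge V x y = wedge V y x :=
  Subtype.ext (deg2_mul_comm V x.1 y.1 x.2 y.2)

/-- If `ω, ω', B' ∈ ⋀²V` satisfy `ω∧ω > 0`, `B'∧ω = 0`, `ω'∧ω = 0`,
`B'∧ω' = 0`, `B'∧B' = ω∧ω + ω'∧ω'` and `ω∧ω = ω'∧ω'`, then
`σ := (1/√2)·B' + i·ω'` satisfies `σ∧σ = 0`, `σ∧ω = 0` and `σ∧σ̄ = 2·(ω∧ω) > 0`. -/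
theorem hyperkahler_two_form_of_orthogonality
    (V : Type) [AddCommGroup V] [Module ℝ V] [FiniteDimensional ℝ V]
    (hdim : Module.finrank ℝ V = 4)
    (ν : ⋀[ℝ]^4 V) (hν : ν ≠ 0)
    (ω ω' B' : ⋀[ℝ]^2 V)
    (hω : PosR V ν (wedge V ω ω))
    (h1 : wedge V B' ω = 0) (h2 : wedge V ω' ω = 0) (h3 : wedge V B' ω' = 0)
    (h4 : wedge V B' B' = wedge V ω ω + wedge V ω' ω')
    (h5 : wedge V ω ω = wedge V ω' ω') :
    wedgeC V (incl2 V ((Real.sqrt 2)⁻¹ • B') + Complex.I • incl2 V ω')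
        (incl2 V ((Real.sqrt 2)⁻¹ • B') + Complex.I • incl2 V ω') = 0 ∧
    wedgeC V (incl2 V ((Real.sqrt 2)⁻¹ • B') + Complex.I • incl2 V ω') (incl2 V ω) = 0 ∧
    wedgeC V (incl2 V ((Real.sqrt 2)⁻¹ • B') + Complex.I • incl2 V ω')
        (conj2 V (incl2 V ((Real.sqrt 2)⁻¹ • B') + Complex.I • incl2 V ω'))
      = (2 : ℝ) • incl4 V (wedge V ω ω) ∧
    PosC V ν (wedgeC V (incl2 V ((Real.sqrt 2)⁻¹ • B') + Complex.I • incl2 V ω')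
        (conj2 V (incl2 V ((Real.sqrt 2)⁻¹ • B') + Complex.I • incl2 V ω'))) := by
  have h3' : wedge V ω' B' = 0 := (wedge_comm' V ω' B').trans h3
  have hBB : wedge V B' B' = wedge V ω' ω' + wedge V ω' ω' := by rw [h4, h5]
  have hs : ((Real.sqrt 2 : ℝ)⁻¹ * (Real.sqrt 2)⁻¹) = (2:ℝ)⁻¹ := by
    rw [← mul_inv, Real.mul_self_sqrt (by norm_num)]
  have htm : ∀ (a b : ℂ) (x y : ⋀[ℝ]^2 V),
      wedgeC V (a ⊗ₜ[ℝ] x) (b ⊗ₜ[ℝ] y) = (a*b) ⊗ₜ[ℝ] (wedge V x y) := fun _ _ _ _ => rfl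
  have hσ : incl2 V ((Real.sqrt 2)⁻¹ • B') + Complex.I • incl2 V ω'
      = (1:ℂ) ⊗ₜ[ℝ] ((Real.sqrt 2)⁻¹ • B') + Complex.I ⊗ₜ[ℝ] ω' := by
    simp [incl2, TensorProduct.smul_tmul', TensorProduct.mk_apply]
  have hconj : conj2 V ((1:ℂ) ⊗ₜ[ℝ] ((Real.sqrt 2)⁻¹ • B') + Complex.I ⊗ₜ[ℝ] ω')
      = (1:ℂ) ⊗ₜ[ℝ] ((Real.sqrt 2)⁻¹ • B') + (-Complex.I) ⊗ₜ[ℝ] ω' := by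
    simp [conj2, conjR, Complex.conj_I]
  have hw : (2:ℝ)⁻¹ • (wedge V ω' ω' + wedge V ω' ω') = wedge V ω' ω' := by
    rw [smul_add, ← add_smul]; norm_num
  have key2 : wedgeC V ((1:ℂ) ⊗ₜ[ℝ] ((Real.sqrt 2)⁻¹ • B') + Complex.I ⊗ₜ[ℝ] ω')
      ((1:ℂ) ⊗ₜ[ℝ] ((Real.sqrt 2)⁻¹ • B') + (-Complex.I) ⊗ₜ[ℝ] ω')
      = (2:ℝ) • incl4 V (wedge V ω ω) := by
    simp only [map_add, LinearMap.add_apply, htm, map_smul, LinearMap.smul_apply,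
      h3, h3', hBB, smul_smul, hs, one_mul, mul_one, smul_zero,
      TensorProduct.tmul_zero, add_zero, zero_add, mul_neg, Complex.I_mul_I, neg_neg,
      neg_mul]
    rw [hw, ← TensorProduct.tmul_add]
    show (1:ℂ) ⊗ₜ[ℝ] (wedge V ω' ω' + wedge V ω' ω') = (2:ℝ) • ((1:ℂ) ⊗ₜ[ℝ] (wedge V ω ω))
    rw [h5, ← TensorProduct.tmul_smul, two_smul]
  refine ⟨?_, ?_, ?_, ?_⟩
  · rw [hσ]
    simp only [map_add, LinearMap.add_apply, htm, map_smul, LinearMap.smul_apply,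
      h3, h3', hBB, smul_smul, hs, one_mul, mul_one, smul_zero,
      TensorProduct.tmul_zero, add_zero, zero_add, Complex.I_mul_I]
    rw [hw, ← TensorProduct.add_tmul]
    norm_num
  · rw [hσ]
    have : incl2 V ω = (1:ℂ) ⊗ₜ[ℝ] ω := rfl
    rw [this]
    simp only [map_add, LinearMap.add_apply, htm, map_smul, LinearMap.smul_apply,
      h1, h2, smul_zero, TensorProduct.tmul_zero, add_zero]
  · rw [hσ, hconj]; exact key2
  · rw [hσ, hconj, key2]
    obtain ⟨c, hc, hcν⟩ := hω
    exact ⟨2 * c, by linarith, by rw [hcν, map_smul, smul_smul]⟩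


end
end
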